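/- arXiv:2405.09088 — 2 statements merged into one kernel-verified Lean document; each statement's English description precedes it below -/
import Mathlib

section
/- If X is a flat of M that is not cyclic, then γ_M(X) = 0. -/
open Set Matroid
open scoped Classical

namespace Paper

variable {α : Type*}

/-- A circuit of a matroid: a minimal dependent set. -/
def Circuit (M : Matroid α) (C : Set α) : Prop :=
  M.Dep C ∧ ∀ D ⊂ C, M.Indep D

/-- A coloop: an element of the ground set lying in no circuit. -/
def Coloop (M : Matroid α) (x : α) : Prop :=
  x ∈ M.E ∧ ∀ C, Circuit M C → x ∉ C

/-- The set of coloops of a matroid. -/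
def coloops (M : Matroid α) : Set α := {x | Coloop M x}

/-- A cyclic set: a subset of the ground set each of whose elements lies in a
circuit contained in the set (equivalently, the restriction has no coloops). -/
def Cyclic (M : Matroid α) (X : Set α) : Prop :=
  X ⊆ M.E ∧ ∀ x ∈ X, ∃ C, Circuit M C ∧ C ⊆ X ∧ x ∈ C

/-- A cyclic flat: a cyclic set that is also a flat. -/
def CyclicFlat (M : Matroid α) (X : Set α) : Prop :=
  Cyclic M X ∧ M.IsFlat X

/-- The rank of a set: the largest cardinality of an independent subset. -/
noncomputable def rk (M : Matroid α) (X : Set α) : ℕ :=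
  sSup (Set.ncard '' {I | M.Indep I ∧ I ⊆ X})

/-- The nullity of a set: `n(X) = |X| − r(X)`. -/
noncomputable def nullity (M : Matroid α) (X : Set α) : ℤ :=
  (X.ncard : ℤ) - rk M X

/-- Deletion of a single element: `M \ e`. -/
noncomputable def deleteElem (M : Matroid α) (e : α) : Matroid α :=
  M ↾ (M.E \ {e})

variable [Fintype α] [DecidableEq α]

/-- The `γ` function: `γ_M(X) = n(X) − Σ_{Z ∈ Z(M), Z ⊊ X} γ_M(Z)`. -/
noncomputable def gamma (M : Matroid α) (X : Finset α) : ℤ :=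
  nullity M ↑X -
    ∑ Z ∈ (Finset.univ.filter (fun Z : Finset α => CyclicFlat M ↑Z ∧ Z ⊂ X)).attach,
      gamma M Z.1
termination_by X.card
decreasing_by
  exact Finset.card_lt_card (Finset.mem_filter.mp Z.2).2.2

end Paper

/-!
The union `Y` of the circuits of `M` contained in `X` is the largest cyclic subset of `X`. When
`X` is a flat, so is `Y`: an element of `cl(Y) ⊆ X` outside a basis of `Y` lies in its fundamental
circuit, which sits inside `X`. The elements of `X \ Y` lie in no circuit of `M|X`, so they belong
to every basis of `X`, and hence `n(X) = n(Y)`. If `X` is not cyclic, `Y ⊊ X`, so the cyclic flats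
properly contained in `X` are exactly those contained in `Y`, and the recursion defining `γ` at `Y`
says that their `γ`-values add up to `n(Y) = n(X)`.
-/

namespace Paper

variable {α : Type*} {M : Matroid α} {C I J X Z : Set α} {e : α}

lemma circuit_iff_isCircuit : Circuit M C ↔ M.IsCircuit C :=
  isCircuit_iff_forall_ssubset.symm

def cyclicCore (M : Matroid α) (X : Set α) : Set α :=
  {x ∈ X | ∃ C, Circuit M C ∧ C ⊆ X ∧ x ∈ C}

lemma cyclicCore_subset : cyclicCore M X ⊆ X :=
  fun _ hx ↦ hx.1

lemma Cyclic.subset_cyclicCore (hZ : Cyclic M Z) (hZX : Z ⊆ X) : Z ⊆ cyclicCore M X := by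
  intro x hx
  obtain ⟨C, hC, hCZ, hxC⟩ := hZ.2 x hx
  exact ⟨hZX hx, C, hC, hCZ.trans hZX, hxC⟩

lemma cyclic_cyclicCore (hX : X ⊆ M.E) : Cyclic M (cyclicCore M X) := by
  refine ⟨cyclicCore_subset.trans hX, fun x ⟨_, C, hC, hCX, hxC⟩ ↦ ⟨C, hC, ?_, hxC⟩⟩
  exact fun y hy ↦ ⟨hCX hy, C, hC, hCX, hy⟩

lemma cyclicCore_ssubset (hX : X ⊆ M.E) (hnc : ¬ Cyclic M X) : cyclicCore M X ⊂ X := by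
  refine cyclicCore_subset.ssubset_of_ne fun h ↦ hnc ?_
  exact h ▸ cyclic_cyclicCore hX

lemma mem_cyclicCore_of_mem_closure (hI : M.Indep I) (hIX : I ⊆ X) (heX : e ∈ X)
    (heI : e ∉ I) (he : e ∈ M.closure I) : e ∈ cyclicCore M X :=
  ⟨heX, M.fundCircuit e I, circuit_iff_isCircuit.2 (hI.fundCircuit_isCircuit he heI),
    (M.fundCircuit_subset_insert e I).trans (insert_subset heX hIX), M.mem_fundCircuit e I⟩

lemma isFlat_cyclicCore (hX : M.IsFlat X) : M.IsFlat (cyclicCore M X) := by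
  obtain ⟨J, hJ⟩ := M.exists_isBasis (cyclicCore M X) (cyclicCore_subset.trans hX.subset_ground)
  refine isFlat_iff_closure_eq.2 ((M.subset_closure _ hJ.subset_ground).antisymm' fun e he ↦ ?_)
  have heX : e ∈ X := hX.closure ▸ M.closure_subset_closure cyclicCore_subset he
  by_cases heJ : e ∈ J
  · exact hJ.subset heJ
  rw [← hJ.closure_eq_closure] at he
  exact mem_cyclicCore_of_mem_closure hJ.indep (hJ.subset.trans cyclicCore_subset) heX heJ he

lemma sdiff_eq_sdiff_cyclicCore_of_isBasis (hI : M.IsBasis I X)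
    (hJ : M.IsBasis J (cyclicCore M X)) (hJI : J ⊆ I) : I \ J = X \ cyclicCore M X := by
  refine subset_antisymm ?_ ?_
  · rintro e ⟨heI, heJ⟩
    refine ⟨hI.subset heI, fun heY ↦ ?_⟩
    exact hI.indep.notMem_closure_sdiff_of_mem heI
      (M.closure_subset_closure (subset_sdiff_singleton hJI heJ) (hJ.subset_closure heY))
  · rintro e ⟨heX, heY⟩
    refine ⟨?_, fun heJ ↦ heY (hJ.subset heJ)⟩
    by_contra heI
    exact heY (mem_cyclicCore_of_mem_closure hI.indep hI.subset heX heI (hI.subset_closure heX))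

lemma rk_eq_ncard_of_isBasis (hI : M.IsBasis I X) (hfin : I.Finite) : rk M X = I.ncard := by
  refine IsGreatest.csSup_eq ⟨⟨I, ⟨hI.indep, hI.subset⟩, rfl⟩, ?_⟩
  rintro _ ⟨J, ⟨hJ, hJX⟩, rfl⟩
  refine ENat.toNat_le_toNat ?_ hfin.encard_lt_top.ne
  exact hI.encard_eq_eRk ▸ hJ.encard_le_eRk_of_subset hJX

lemma nullity_cyclicCore (hX : X ⊆ M.E) (hfin : X.Finite) :
    nullity M (cyclicCore M X) = nullity M X := by
  obtain ⟨J, hJ⟩ := M.exists_isBasis (cyclicCore M X) (cyclicCore_subset.trans hX)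
  obtain ⟨I, hI, hJI⟩ := hJ.indep.subset_isBasis_of_subset (hJ.subset.trans cyclicCore_subset) hX
  have hIfin : I.Finite := hfin.subset hI.subset
  have hcard := congrArg ncard (sdiff_eq_sdiff_cyclicCore_of_isBasis hI hJ hJI)
  have hI_card := ncard_sdiff_add_ncard_of_subset hJI hIfin
  have hX_card := ncard_sdiff_add_ncard_of_subset (cyclicCore_subset (M := M)) hfin
  rw [nullity, nullity, rk_eq_ncard_of_isBasis hI hIfin,
    rk_eq_ncard_of_isBasis hJ (hIfin.subset hJI)]
  omega

section

variable [Fintype α] [DecidableEq α]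

lemma gamma_eq_nullity_sub (M : Matroid α) (X : Finset α) :
    gamma M X = nullity M X -
      ∑ Z ∈ Finset.univ.filter (fun Z : Finset α ↦ CyclicFlat M Z ∧ Z ⊂ X), gamma M Z := by
  rw [gamma, Finset.sum_attach]

lemma CyclicFlat.sum_gamma_eq_nullity {Y : Finset α} (hY : CyclicFlat M Y) :
    ∑ Z ∈ Finset.univ.filter (fun Z : Finset α ↦ CyclicFlat M Z ∧ Z ⊆ Y), gamma M Z
      = nullity M Y := by
  have hsplit : Finset.univ.filter (fun Z : Finset α ↦ CyclicFlat M Z ∧ Z ⊆ Y) =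
      insert Y (Finset.univ.filter (fun Z : Finset α ↦ CyclicFlat M Z ∧ Z ⊂ Y)) := by
    ext Z
    simp only [Finset.mem_filter, Finset.mem_univ, true_and, Finset.mem_insert,
      subset_iff_ssubset_or_eq]
    constructor
    · rintro ⟨hZ, hZY | rfl⟩
      exacts [Or.inr ⟨hZ, hZY⟩, Or.inl rfl]
    · rintro (rfl | ⟨hZ, hZY⟩)
      exacts [⟨hY, Or.inr rfl⟩, ⟨hZ, Or.inl hZY⟩]
  rw [hsplit, Finset.sum_insert (by simp), gamma_eq_nullity_sub]
  ring

theorem statement_4 (M : Matroid α) (X : Finset α)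
    (hflat : M.IsFlat ↑X) (hnc : ¬ Cyclic M ↑X) :
    gamma M X = 0 := by
  have hXE : (X : Set α) ⊆ M.E := hflat.subset_ground
  obtain ⟨Y, hY⟩ : ∃ Y : Finset α, (Y : Set α) = cyclicCore M X :=
    ⟨_, (toFinite _).coe_toFinset⟩
  have hYcf : CyclicFlat M Y := hY ▸ ⟨cyclic_cyclicCore hXE, isFlat_cyclicCore hflat⟩
  have hbelow : Finset.univ.filter (fun Z : Finset α ↦ CyclicFlat M Z ∧ Z ⊂ X) =
      Finset.univ.filter (fun Z : Finset α ↦ CyclicFlat M Z ∧ Z ⊆ Y) := by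
    ext Z
    simp only [Finset.mem_filter, Finset.mem_univ, true_and, ← Finset.coe_ssubset,
      ← Finset.coe_subset, hY]
    exact and_congr_right fun hZ ↦ ⟨fun h ↦ hZ.1.subset_cyclicCore h.subset,
      fun h ↦ h.trans_ssubset (cyclicCore_ssubset hXE hnc)⟩
  rw [gamma_eq_nullity_sub, hbelow, hYcf.sum_gamma_eq_nullity, hY,
    nullity_cyclicCore hXE X.finite_toSet, sub_self]

end

end Paper
end

section
/- Let X be a cyclic set of M⁺ with e ∈ X. Suppose (a) there exists a cyclic flat Z_X of M⁺ with Z_X ⊊ X and Δγ(Z_X) > 0, and (b) for all cyclic flats Z0, Z1 of M⁺ with Z0 ⊊ X, Z1 ⊊ X, Δγ(Z0) > 0 and Δγ(Z1) > 0, we have Z0 ∨ Z1 ⊊ X. Then Δγ(X) ≥ 0. Similarly, let W be a cyclic set of M⁺ with e ∈ W such that for all cyclic flats Z0, Z1 of M⁺ with Z0 ⊊ W, Z1 ⊊ W, Δγ(Z0) < 0 and Δγ(Z1) < 0, we have Z0 ∨ Z1 ⊊ W. Then Δγ(W) ≤ 0. -/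
open Set Matroid
open scoped Classical

namespace Paper

variable {α : Type*}

variable [Fintype α] [DecidableEq α]

/-- `Δγ(X) = γ_M(X − e) − γ_{M⁺}(X)` where `M = M⁺ \ e`. -/
noncomputable def dgamma (M : Matroid α) (e : α) (X : Finset α) : ℤ :=
  gamma (deleteElem M e) (X.erase e) - gamma M X

end Paper

/-!
If `e` lies in the cyclic set `X`, deleting it lowers the nullity of `X` by one, and `Z ↦ Z - e`
matches the cyclic flats of `M⁺` below `X` with those of `M` below `X - e`, up to sets `Z - e`
that are non-cyclic flats of `M`, on which `γ_M` vanishes. Hence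
`Δγ(X) = -1 - Σ_{Z ⊊ X} Δγ(Z)`, where only cyclic flats `Z ∋ e` contribute; for a cyclic flat
`F ∋ e` this says that `Δγ` sums to `-1` over the cyclic flats `Z ∋ e` below `F`.
A Weisner-type induction on `F` refines this: for a cyclic flat `x ∋ e`, the sum of `Δγ(Z)` over
the cyclic flats `Z ∋ e` with `Z ∨ x = F` is `-1` for `F = x` and `0` otherwise. Summing over
`F ⊊ X` leaves `Δγ(X) = -Σ Δγ(Z)` over the `Z ∋ e` below `X` with `Z ∨ x ⊄ X`. Taking for `x` a
cyclic flat with `Δγ(x)` of the relevant strict sign, the join hypothesis forces every remaining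
term to have the opposite weak sign. For `W` without such an `x`, all `Δγ(Z)` with `Z ⊊ W` are
nonnegative and the first formula gives `Δγ(W) ≤ -1`.
-/

namespace Paper

variable {α : Type*}

section Cyclic

variable {N : Matroid α} {C R X Y Z : Set α} {x : α}

lemma circuit_iff_isCircuit_s14 : Circuit N C ↔ N.IsCircuit C :=
  isCircuit_iff_forall_ssubset.symm

lemma cyclic_iff :
    Cyclic N X ↔ X ⊆ N.E ∧ ∀ x ∈ X, ∃ C ⊆ X, N.IsCircuit C ∧ x ∈ C := by
  simp only [Cyclic, circuit_iff_isCircuit_s14]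
  exact and_congr_right fun _ => forall₂_congr fun _ _ =>
    ⟨fun ⟨C, hC, hCX, hxC⟩ => ⟨C, hCX, hC, hxC⟩,
      fun ⟨C, hCX, hC, hxC⟩ => ⟨C, hC, hCX, hxC⟩⟩

lemma Cyclic.exists_isCircuit (hX : Cyclic N X) (hx : x ∈ X) :
    ∃ C ⊆ X, N.IsCircuit C ∧ x ∈ C :=
  (cyclic_iff.1 hX).2 x hx

lemma Cyclic.mem_closure_sdiff_singleton (hX : Cyclic N X) (hx : x ∈ X) :
    x ∈ N.closure (X \ {x}) := by
  obtain ⟨C, hCX, hC, hxC⟩ := hX.exists_isCircuit hx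
  exact N.closure_subset_closure (sdiff_subset_sdiff_left hCX)
    (hC.mem_closure_sdiff_singleton_of_mem hxC)

lemma Cyclic.union (hX : Cyclic N X) (hY : Cyclic N Y) : Cyclic N (X ∪ Y) := by
  refine cyclic_iff.2 ⟨union_subset hX.1 hY.1, ?_⟩
  rintro x (hx | hx)
  · obtain ⟨C, hCX, hC⟩ := hX.exists_isCircuit hx
    exact ⟨C, hCX.trans subset_union_left, hC⟩
  · obtain ⟨C, hCY, hC⟩ := hY.exists_isCircuit hx
    exact ⟨C, hCY.trans subset_union_right, hC⟩

lemma Cyclic.closure (hX : Cyclic N X) : Cyclic N (N.closure X) := by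
  refine cyclic_iff.2 ⟨N.closure_subset_ground X, fun x hx => ?_⟩
  by_cases hxX : x ∈ X
  · obtain ⟨C, hCX, hC⟩ := hX.exists_isCircuit hxX
    exact ⟨C, hCX.trans (N.subset_closure X hX.1), hC⟩
  · obtain ⟨C, hCX, hC⟩ := (mem_closure_iff_exists_isCircuit hxX).1 hx
    exact ⟨C, hCX.trans (insert_subset hx (N.subset_closure X hX.1)), hC⟩

lemma cyclic_restrict_iff (hR : R ⊆ N.E) (hXR : X ⊆ R) : Cyclic (N ↾ R) X ↔ Cyclic N X := by
  simp only [cyclic_iff, restrict_isCircuit_iff hR, restrict_ground_eq, hXR, hXR.trans hR,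
    true_and]
  exact forall₂_congr fun _ _ =>
    ⟨fun ⟨C, hCX, hC, hxC⟩ => ⟨C, hCX, hC.1, hxC⟩,
      fun ⟨C, hCX, hC, hxC⟩ => ⟨C, hCX, ⟨hC, hCX.trans hXR⟩, hxC⟩⟩

lemma cyclicFlat_closure (hX : Cyclic N X) : CyclicFlat N (N.closure X) :=
  ⟨hX.closure, N.isFlat_closure X⟩

lemma CyclicFlat.closure_sdiff_singleton (hZ : CyclicFlat N Z) (x : α) :
    N.closure (Z \ {x}) = Z := by
  by_cases hx : x ∈ Z
  · rw [closure_sdiff_singleton_eq_closure (hZ.1.mem_closure_sdiff_singleton hx), hZ.2.closure]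
  · rw [sdiff_singleton_eq_self hx, hZ.2.closure]

lemma cyclicFlat_restrict_iff (hR : R ⊆ N.E) (hZR : Z ⊆ R) (hcl : N.closure Z ⊆ R) :
    CyclicFlat (N ↾ R) Z ↔ CyclicFlat N Z := by
  rw [CyclicFlat, CyclicFlat, cyclic_restrict_iff hR hZR, isFlat_iff_closure_eq,
    isFlat_iff_closure_eq, restrict_closure_eq _ hZR hR, inter_eq_self_of_subset_left hcl]

end Cyclic

section Nullity

variable {N : Matroid α} {R X : Set α} {x : α}

lemma cast_rk_eq_eRk [Finite α] (N : Matroid α) (X : Set α) : (rk N X : ℕ∞) = N.eRk X := by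
  obtain ⟨I, hI⟩ := N.exists_isBasis' X
  have hbdd : ∀ n ∈ ncard '' {J | N.Indep J ∧ J ⊆ X}, n ≤ I.ncard := by
    rintro _ ⟨J, ⟨hJ, hJX⟩, rfl⟩
    have h := hJ.encard_le_eRk_of_subset hJX
    rw [← hI.encard_eq_eRk, ← J.toFinite.cast_ncard_eq, ← I.toFinite.cast_ncard_eq] at h
    exact_mod_cast h
  have hmem : I.ncard ∈ ncard '' {J | N.Indep J ∧ J ⊆ X} := ⟨I, ⟨hI.indep, hI.subset⟩, rfl⟩
  rw [rk, le_antisymm (csSup_le ⟨_, hmem⟩ hbdd) (le_csSup ⟨_, hbdd⟩ hmem),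
    ← hI.encard_eq_eRk, I.toFinite.cast_ncard_eq]

lemma nullity_restrict [Finite α] (hXR : X ⊆ R) : nullity (N ↾ R) X = nullity N X := by
  have h := restrict_eRk_eq N hXR
  rw [← cast_rk_eq_eRk, ← cast_rk_eq_eRk, Nat.cast_inj] at h
  rw [nullity, nullity, h]

lemma nullity_sdiff_singleton_of_mem_closure [Finite α] (hxX : x ∈ X)
    (hx : x ∈ N.closure (X \ {x})) : nullity N (X \ {x}) = nullity N X - 1 := by
  have h : N.eRk (X \ {x}) = N.eRk X := by
    rw [← eRk_closure_eq, closure_sdiff_singleton_eq_closure hx, eRk_closure_eq]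
  rw [← cast_rk_eq_eRk, ← cast_rk_eq_eRk, Nat.cast_inj] at h
  rw [nullity, nullity, h, ← ncard_sdiff_singleton_add_one hxX]
  push_cast
  ring

lemma nullity_sdiff_singleton_of_notMem_closure [Finite α] (hxX : x ∈ X)
    (hx : x ∈ N.E \ N.closure (X \ {x})) : nullity N (X \ {x}) = nullity N X := by
  have h := eRk_insert_eq_add_one hx
  rw [insert_sdiff_singleton, insert_eq_of_mem hxX, ← cast_rk_eq_eRk, ← cast_rk_eq_eRk] at h
  rw [nullity, nullity, ← ncard_sdiff_singleton_add_one hxX,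
    show rk N X = rk N (X \ {x}) + 1 by exact_mod_cast h]
  push_cast
  ring

end Nullity

section CyclicPart

variable {N : Matroid α} {Z : Set α} {X : Finset α}

noncomputable def cyclicPart (N : Matroid α) (X : Finset α) : Finset α :=
  X.filter fun x => ∃ C ⊆ (X : Set α), N.IsCircuit C ∧ x ∈ C

lemma cyclicPart_subset : cyclicPart N X ⊆ X :=
  Finset.filter_subset _ _

lemma Cyclic.subset_cyclicPart (hZ : Cyclic N Z) (hZX : Z ⊆ X) : Z ⊆ cyclicPart N X := by
  intro x hx
  obtain ⟨C, hCZ, hC, hxC⟩ := hZ.exists_isCircuit hx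
  exact Finset.mem_filter.2 ⟨hZX hx, C, hCZ.trans hZX, hC, hxC⟩

lemma cyclic_cyclicPart (hX : ↑X ⊆ N.E) : Cyclic N (cyclicPart N X) := by
  refine cyclic_iff.2 ⟨(Finset.coe_subset.2 cyclicPart_subset).trans hX, fun x hx => ?_⟩
  obtain ⟨C, hCX, hC, hxC⟩ := (Finset.mem_filter.1 hx).2
  exact ⟨C, fun y hy => Finset.mem_filter.2 ⟨hCX hy, C, hCX, hC, hy⟩, hC, hxC⟩

lemma isFlat_cyclicPart (hX : N.IsFlat X) : N.IsFlat (cyclicPart N X) := by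
  have hWX : (cyclicPart N X : Set α) ⊆ X := Finset.coe_subset.2 cyclicPart_subset
  refine isFlat_iff_closure_eq.2 <| (N.subset_closure _ (hWX.trans hX.subset_ground)).antisymm' ?_
  intro x hx
  by_contra hxW
  have hxX : x ∈ (X : Set α) := hX.closure ▸ N.closure_subset_closure hWX hx
  obtain ⟨C, hCW, hC, hxC⟩ := (mem_closure_iff_exists_isCircuit hxW).1 hx
  exact hxW (Finset.mem_filter.2 ⟨hxX, C, hCW.trans (insert_subset hxX hWX), hC, hxC⟩)

lemma nullity_cyclicPart [Finite α] [DecidableEq α] (hX : ↑X ⊆ N.E) :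
    nullity N (cyclicPart N X) = nullity N X := by
  suffices h : ∀ S ⊆ X \ cyclicPart N X, nullity N ↑(X \ S) = nullity N X by
    rw [← h _ subset_rfl, Finset.sdiff_sdiff_eq_self cyclicPart_subset]
  intro S
  induction S using Finset.induction_on with
  | empty => simp
  | insert a S haS ih =>
    intro hS
    obtain ⟨haX, haW⟩ := Finset.mem_sdiff.1 (hS (Finset.mem_insert_self a S))
    have haXS : a ∈ (↑(X \ S) : Set α) := Finset.mem_sdiff.2 ⟨haX, haS⟩
    have hXS : (↑(X \ S) : Set α) ⊆ X := Finset.coe_subset.2 Finset.sdiff_subset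
    have hacl : a ∉ N.closure (↑(X \ S) \ {a}) := fun hcl => by
      obtain ⟨C, hCX, hC, haC⟩ := (mem_closure_iff_exists_isCircuit (by simp)).1 hcl
      have hCX : C ⊆ X := hCX.trans (insert_subset (hXS haXS) (sdiff_subset.trans hXS))
      exact haW (Finset.mem_filter.2 ⟨haX, C, hCX, hC, haC⟩)
    rw [Finset.sdiff_insert, Finset.coe_erase,
      nullity_sdiff_singleton_of_notMem_closure haXS ⟨hX haX, hacl⟩,
      ih ((Finset.subset_insert a S).trans hS)]

end CyclicPart

lemma filter_subset_eq_insert_filter_ssubset [DecidableEq α] {s : Finset (Finset α)}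
    {F : Finset α} (hF : F ∈ s) : {Z ∈ s | Z ⊆ F} = insert F {Z ∈ s | Z ⊂ F} := by
  ext Z
  simp only [Finset.mem_filter, Finset.mem_insert]
  constructor
  · rintro ⟨hZ, hZF⟩
    exact hZF.eq_or_ssubset.imp id fun h => ⟨hZ, h⟩
  · rintro (rfl | ⟨hZ, hZF⟩)
    exacts [⟨hF, subset_rfl⟩, ⟨hZ, hZF.subset⟩]

section Gamma

variable [Fintype α] {N : Matroid α}

noncomputable def cyclicFlats (N : Matroid α) : Finset (Finset α) :=
  {Z | CyclicFlat N Z}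

@[simp] lemma mem_cyclicFlats {Z : Finset α} : Z ∈ cyclicFlats N ↔ CyclicFlat N Z :=
  Finset.mem_filter_univ Z

variable [DecidableEq α] {R : Set α}

lemma gamma_eq (N : Matroid α) (X : Finset α) :
    gamma N X = nullity N X - ∑ Z ∈ cyclicFlats N with Z ⊂ X, gamma N Z := by
  rw [gamma, Finset.sum_attach, cyclicFlats, Finset.filter_filter]

lemma gamma_eq_zero_of_isFlat_of_not_cyclic {F : Finset α} (hF : N.IsFlat F)
    (hcyc : ¬ Cyclic N F) : gamma N F = 0 := by
  have hFE : ↑F ⊆ N.E := hF.subset_ground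
  have hW : CyclicFlat N (cyclicPart N F) := ⟨cyclic_cyclicPart hFE, isFlat_cyclicPart hF⟩
  have hWF : cyclicPart N F ⊂ F := cyclicPart_subset.ssubset_of_ne fun h => hcyc (h ▸ hW.1)
  have hbelow : {Z ∈ cyclicFlats N | Z ⊂ F} = {Z ∈ cyclicFlats N | Z ⊆ cyclicPart N F} := by
    refine Finset.filter_congr fun Z hZ => ⟨fun hZF => ?_, fun hZW => hZW.trans_ssubset hWF⟩
    exact Finset.coe_subset.1
      ((mem_cyclicFlats.1 hZ).1.subset_cyclicPart (Finset.coe_subset.2 hZF.subset))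
  rw [gamma_eq, hbelow, filter_subset_eq_insert_filter_ssubset (mem_cyclicFlats.2 hW),
    Finset.sum_insert (by simp), gamma_eq N (cyclicPart N F), nullity_cyclicPart hFE]
  ring

lemma gamma_restrict {A : Finset α} (hR : R ⊆ N.E) (hAR : ↑A ⊆ R) (hcl : N.closure A ⊆ R) :
    gamma (N ↾ R) A = gamma N A := by
  induction A using Finset.strongInduction with
  | H A ih =>
  have hbelow : {Z ∈ cyclicFlats (N ↾ R) | Z ⊂ A} = {Z ∈ cyclicFlats N | Z ⊂ A} := by
    ext Z
    simp only [Finset.mem_filter, mem_cyclicFlats, and_congr_left_iff]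
    intro hZA
    have hZA : (Z : Set α) ⊆ A := Finset.coe_subset.2 hZA.subset
    exact cyclicFlat_restrict_iff hR (hZA.trans hAR) ((N.closure_subset_closure hZA).trans hcl)
  rw [gamma_eq, gamma_eq, hbelow, nullity_restrict hAR]
  refine congrArg _ (Finset.sum_congr rfl fun Z hZ => ?_)
  have hZA := (Finset.mem_filter.1 hZ).2
  have hZA' : (Z : Set α) ⊆ A := Finset.coe_subset.2 hZA.subset
  exact ih Z hZA (hZA'.trans hAR) ((N.closure_subset_closure hZA').trans hcl)

end Gamma

section Deletion

variable (M : Matroid α) (e : α)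

lemma deleteElem_closure {A : Set α} (hA : A ⊆ M.E \ {e}) :
    (deleteElem M e).closure A = M.closure A \ {e} := by
  rw [deleteElem, restrict_closure_eq _ hA sdiff_subset, ← inter_sdiff_assoc,
    inter_eq_self_of_subset_left (M.closure_subset_ground A)]

variable {M e}

lemma isFlat_deleteElem_sdiff_singleton {F : Set α} (hF : M.IsFlat F) :
    (deleteElem M e).IsFlat (F \ {e}) := by
  rw [isFlat_iff_closure_eq, deleteElem_closure M e (sdiff_subset_sdiff_left hF.subset_ground)]
  refine (sdiff_subset_sdiff_left ?_).antisymm (subset_sdiff_singleton ?_ (by simp))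
  · exact (M.closure_subset_closure sdiff_subset).trans hF.closure.subset
  · exact M.subset_closure _ (sdiff_subset.trans hF.subset_ground)

lemma cyclicFlat_closure_of_deleteElem {A : Set α} (hA : CyclicFlat (deleteElem M e) A) :
    CyclicFlat M (M.closure A) :=
  cyclicFlat_closure ((cyclic_restrict_iff sdiff_subset hA.1.1).1 hA.1)

lemma closure_sdiff_singleton_of_isFlat_deleteElem {A : Set α}
    (hA : (deleteElem M e).IsFlat A) : M.closure A \ {e} = A := by
  rw [← deleteElem_closure M e hA.subset_ground, hA.closure]

end Deletion

variable [Fintype α]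

section DeltaGamma

variable [DecidableEq α] {M : Matroid α} {e : α}

lemma dgamma_eq_zero_of_notMem {Z : Finset α} (hZ : CyclicFlat M Z) (heZ : e ∉ Z) :
    dgamma M e Z = 0 := by
  have hZe : (Z : Set α) ⊆ M.E \ {e} := subset_sdiff_singleton hZ.1.1 (by simpa)
  rw [dgamma, Finset.erase_eq_of_notMem heZ, deleteElem,
    gamma_restrict sdiff_subset hZe (hZ.2.closure.subset.trans hZe), sub_self]

/- Every cyclic flat `Z` of `M` is the closure of `Z - e`, and every cyclic flat `A` of `M \ e` is
`cl(A) - e`; the remaining sets `Z - e` are flats of `M \ e` that are not cyclic. -/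
lemma sum_gamma_deleteElem_cyclicFlats_ssubset {X : Finset α} (hX : Cyclic M X) (heX : e ∈ X) :
    ∑ A ∈ cyclicFlats (deleteElem M e) with A ⊂ X.erase e, gamma (deleteElem M e) A =
      ∑ Z ∈ cyclicFlats M with Z ⊂ X, gamma (deleteElem M e) (Z.erase e) := by
  have hXcl : (X : Set α) ⊆ M.closure (X \ {e}) := by
    rw [closure_sdiff_singleton_eq_closure (hX.mem_closure_sdiff_singleton heX)]
    exact M.subset_closure _ hX.1
  have hinj :
      Set.InjOn (Finset.erase · e) ↑({Z ∈ cyclicFlats M | Z ⊂ X} : Finset (Finset α)) := by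
    intro Z hZ Z' hZ' h
    simp only [Finset.coe_filter, mem_cyclicFlats, Set.mem_ofPred_eq] at hZ hZ'
    apply Finset.coe_injective
    rw [← hZ.1.closure_sdiff_singleton e, ← hZ'.1.closure_sdiff_singleton e, ← Finset.coe_erase,
      ← Finset.coe_erase]
    exact congrArg (fun Z : Finset α => M.closure Z) h
  rw [← Finset.sum_image (f := gamma (deleteElem M e)) hinj]
  refine Finset.sum_subset (fun A hA => ?_) (fun A hA hAnot => ?_)
  · obtain ⟨hA, hAX⟩ := Finset.mem_filter.1 hA
    rw [mem_cyclicFlats] at hA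
    have hlift := closure_sdiff_singleton_of_isFlat_deleteElem hA.2
    have hliftX : M.closure A ⊆ X := by
      rw [← insert_eq_of_mem heX, ← insert_sdiff_singleton, ← Finset.coe_erase]
      exact sdiff_singleton_subset_iff.1 (hlift.trans_subset (Finset.coe_subset.2 hAX.subset))
    refine Finset.mem_image.2 ⟨(M.closure A).toFinset, Finset.mem_filter.2 ⟨?_, ?_⟩, ?_⟩
    · simpa using cyclicFlat_closure_of_deleteElem hA
    · refine Finset.ssubset_iff_subset_ne.2 ⟨by simpa using hliftX, fun h => hAX.ne ?_⟩
      apply Finset.coe_injective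
      rw [Finset.coe_erase, ← hlift, ← Set.coe_toFinset (M.closure A), h]
    · apply Finset.coe_injective
      rw [Finset.coe_erase, Set.coe_toFinset, hlift]
  · obtain ⟨Z, hZ, rfl⟩ := Finset.mem_image.1 hA
    obtain ⟨hZ, hZX⟩ := Finset.mem_filter.1 hZ
    rw [mem_cyclicFlats] at hZ
    have hflat : (deleteElem M e).IsFlat ↑(Z.erase e) := by
      rw [Finset.coe_erase]
      exact isFlat_deleteElem_sdiff_singleton hZ.2
    refine gamma_eq_zero_of_isFlat_of_not_cyclic hflat fun hcyc => hAnot ?_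
    refine Finset.mem_filter.2 ⟨mem_cyclicFlats.2 ⟨hcyc, hflat⟩,
      Finset.ssubset_iff_subset_ne.2 ⟨Finset.erase_subset_erase e hZX.subset, fun h => ?_⟩⟩
    refine hZX.not_subset (Finset.coe_subset.1 ?_)
    rw [← hZ.closure_sdiff_singleton e, ← Finset.coe_erase, h, Finset.coe_erase]
    exact hXcl

theorem dgamma_eq_neg_one_sub_sum {X : Finset α} (hX : Cyclic M X) (heX : e ∈ X) :
    dgamma M e X = -1 - ∑ Z ∈ cyclicFlats M with Z ⊂ X, dgamma M e Z := by
  have hnull : nullity (deleteElem M e) ↑(X.erase e) = nullity M X - 1 := by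
    rw [Finset.coe_erase, deleteElem, nullity_restrict (sdiff_subset_sdiff_left hX.1),
      nullity_sdiff_singleton_of_mem_closure heX (hX.mem_closure_sdiff_singleton heX)]
  simp only [dgamma, Finset.sum_sub_distrib]
  rw [gamma_eq (deleteElem M e), gamma_eq M, hnull,
    sum_gamma_deleteElem_cyclicFlats_ssubset hX heX]
  ring

lemma dgamma_eq_neg_one_sub_sum_mem {X : Finset α} (hX : Cyclic M X) (heX : e ∈ X) :
    dgamma M e X = -1 - ∑ Z ∈ cyclicFlats M with e ∈ Z ∧ Z ⊂ X, dgamma M e Z := by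
  have hsupp : ∑ Z ∈ cyclicFlats M with e ∈ Z ∧ Z ⊂ X, dgamma M e Z =
      ∑ Z ∈ cyclicFlats M with Z ⊂ X, dgamma M e Z := by
    refine Finset.sum_subset (fun Z hZ => ?_) (fun Z hZ hZe => ?_)
    · simp only [Finset.mem_filter] at hZ ⊢
      exact ⟨hZ.1, hZ.2.2⟩
    · simp only [Finset.mem_filter, not_and] at hZ hZe
      exact dgamma_eq_zero_of_notMem (mem_cyclicFlats.1 hZ.1) fun he => hZe hZ.1 he hZ.2
  rw [hsupp, dgamma_eq_neg_one_sub_sum hX heX]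

lemma sum_dgamma_cyclicFlats_subset {F : Finset α} (hF : CyclicFlat M F) (heF : e ∈ F) :
    ∑ Z ∈ cyclicFlats M with e ∈ Z ∧ Z ⊆ F, dgamma M e Z = -1 := by
  have h := filter_subset_eq_insert_filter_ssubset (s := {Z ∈ cyclicFlats M | e ∈ Z})
    (Finset.mem_filter.2 ⟨mem_cyclicFlats.2 hF, heF⟩)
  simp only [Finset.filter_filter] at h
  rw [h, Finset.sum_insert (by simp), dgamma_eq_neg_one_sub_sum_mem hF.1 heF]
  ring

end DeltaGamma

section Join

/-- `Z₀ ∨ Z₁`, as a `Finset` so that sums can be split along its fibres. -/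
noncomputable def join (M : Matroid α) (Z₀ Z₁ : Finset α) : Finset α :=
  (M.closure (↑Z₀ ∪ ↑Z₁)).toFinset

variable {M : Matroid α} {e : α} {Z₀ Z₁ x : Finset α}

@[simp] lemma coe_join : (join M Z₀ Z₁ : Set α) = M.closure (↑Z₀ ∪ ↑Z₁) :=
  Set.coe_toFinset _

lemma CyclicFlat.join (h₀ : CyclicFlat M Z₀) (h₁ : CyclicFlat M Z₁) :
    CyclicFlat M (join M Z₀ Z₁) := by
  rw [coe_join]
  exact cyclicFlat_closure (h₀.1.union h₁.1)

lemma subset_join_left (h : ↑Z₀ ∪ ↑Z₁ ⊆ M.E) : Z₀ ⊆ join M Z₀ Z₁ := by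
  rw [← Finset.coe_subset, coe_join]
  exact M.subset_closure_of_subset' subset_union_left (subset_union_left.trans h)

lemma subset_join_right (h : ↑Z₀ ∪ ↑Z₁ ⊆ M.E) : Z₁ ⊆ join M Z₀ Z₁ := by
  rw [← Finset.coe_subset, coe_join]
  exact M.subset_closure_of_subset' subset_union_right (subset_union_right.trans h)

lemma join_subset {F : Finset α} (hF : M.IsFlat F) (h₀ : Z₀ ⊆ F) (h₁ : Z₁ ⊆ F) :
    join M Z₀ Z₁ ⊆ F := by
  rw [← Finset.coe_subset, coe_join, ← hF.closure]
  exact M.closure_subset_closure (union_subset (by simpa) (by simpa))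

variable [DecidableEq α]

lemma sum_filter_join_eq_sum_fiberwise (f : Finset α → ℤ) (p P : Finset α → Prop)
    [DecidablePred p] [DecidablePred P] (hx : CyclicFlat M x) :
    ∑ B ∈ cyclicFlats M with p B ∧ P (join M B x), f B =
      ∑ F ∈ cyclicFlats M with x ⊆ F ∧ P F,
        ∑ B ∈ cyclicFlats M with p B ∧ join M B x = F, f B := by
  rw [← Finset.sum_fiberwise_of_maps_to (g := (join M · x)) fun B hB => ?_]
  · refine Finset.sum_congr rfl fun F hF => Finset.sum_congr ?_ fun _ _ => rfl
    ext B
    simp only [Finset.mem_filter]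
    constructor
    · rintro ⟨⟨hB, hpB, -⟩, rfl⟩
      exact ⟨hB, hpB, rfl⟩
    · rintro ⟨hB, hpB, rfl⟩
      exact ⟨⟨hB, hpB, (Finset.mem_filter.1 hF).2.2⟩, rfl⟩
  · obtain ⟨hB, -, hPB⟩ := Finset.mem_filter.1 hB
    rw [mem_cyclicFlats] at hB
    exact Finset.mem_filter.2 ⟨mem_cyclicFlats.2 (hB.join hx),
      subset_join_right (union_subset hB.1.1 hx.1.1), hPB⟩

lemma sum_dgamma_join_eq (hx : CyclicFlat M x) (hex : e ∈ x) {F : Finset α}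
    (hF : CyclicFlat M F) (hxF : x ⊆ F) :
    ∑ B ∈ cyclicFlats M with e ∈ B ∧ join M B x = F, dgamma M e B =
      if F = x then -1 else 0 := by
  induction F using Finset.strongInduction with
  | H F ih =>
  have hdown : ∑ B ∈ cyclicFlats M with e ∈ B ∧ join M B x ⊆ F, dgamma M e B = -1 := by
    rw [← sum_dgamma_cyclicFlats_subset hF (hxF hex)]
    refine Finset.sum_congr (Finset.filter_congr fun B hB => and_congr_right fun _ => ?_)
      fun _ _ => rfl
    have hB := mem_cyclicFlats.1 hB
    exact ⟨fun h => (subset_join_left (union_subset hB.1.1 hx.1.1)).trans h,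
      fun h => join_subset hF.2 h hxF⟩
  set T : Finset (Finset α) := {F' ∈ cyclicFlats M | x ⊆ F' ∧ F' ⊆ F}
  have hrest : ∑ F' ∈ T.erase F, ∑ B ∈ cyclicFlats M with e ∈ B ∧ join M B x = F', dgamma M e B =
      ∑ F' ∈ T.erase F, if F' = x then -1 else 0 := by
    refine Finset.sum_congr rfl fun F' hF' => ?_
    obtain ⟨hne, hF'⟩ := Finset.mem_erase.1 hF'
    obtain ⟨hF', hxF', hF'F⟩ := Finset.mem_filter.1 hF'
    exact ih F' (hF'F.ssubset_of_ne hne) (mem_cyclicFlats.1 hF') hxF'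
  rw [sum_filter_join_eq_sum_fiberwise _ (e ∈ ·) (· ⊆ F) hx,
    ← Finset.add_sum_erase T _ (Finset.mem_filter.2 ⟨mem_cyclicFlats.2 hF, hxF, subset_rfl⟩),
    hrest, Finset.sum_ite_eq'] at hdown
  by_cases hFx : F = x
  · subst hFx
    simpa using hdown
  · have hxT : x ∈ T.erase F := Finset.mem_erase.2
      ⟨Ne.symm hFx, Finset.mem_filter.2 ⟨mem_cyclicFlats.2 hx, subset_rfl, hxF⟩⟩
    rw [if_pos hxT] at hdown
    rw [if_neg hFx]
    linarith

lemma sum_dgamma_join_ssubset (hx : CyclicFlat M x) (hex : e ∈ x) {X : Finset α}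
    (hxX : x ⊂ X) : ∑ B ∈ cyclicFlats M with e ∈ B ∧ join M B x ⊂ X, dgamma M e B = -1 := by
  rw [sum_filter_join_eq_sum_fiberwise _ (e ∈ ·) (· ⊂ X) hx,
    Finset.sum_congr rfl fun F hF => ?_, Finset.sum_ite_eq',
    if_pos (Finset.mem_filter.2 ⟨mem_cyclicFlats.2 hx, subset_rfl, hxX⟩)]
  obtain ⟨hF, hxF, -⟩ := Finset.mem_filter.1 hF
  exact sum_dgamma_join_eq hx hex (mem_cyclicFlats.1 hF) hxF

theorem dgamma_eq_neg_sum_join_not_ssubset {X : Finset α} (hX : Cyclic M X) (heX : e ∈ X)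
    (hx : CyclicFlat M x) (hex : e ∈ x) (hxX : x ⊂ X) :
    dgamma M e X =
      -∑ Z ∈ cyclicFlats M with e ∈ Z ∧ Z ⊂ X ∧ ¬ join M Z x ⊂ X, dgamma M e Z := by
  have hsplit : ∑ Z ∈ cyclicFlats M with e ∈ Z ∧ Z ⊂ X, dgamma M e Z =
      ∑ B ∈ cyclicFlats M with e ∈ B ∧ join M B x ⊂ X, dgamma M e B +
        ∑ Z ∈ cyclicFlats M with e ∈ Z ∧ Z ⊂ X ∧ ¬ join M Z x ⊂ X, dgamma M e Z := by
    rw [← Finset.sum_filter_add_sum_filter_not _ (join M · x ⊂ X), Finset.filter_filter,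
      Finset.filter_filter]
    refine congrArg₂ _ (Finset.sum_congr (Finset.filter_congr fun B hB => ?_) fun _ _ => rfl)
      (by simp only [and_assoc])
    have hB := mem_cyclicFlats.1 hB
    exact ⟨fun ⟨⟨he, _⟩, h⟩ => ⟨he, h⟩, fun ⟨he, h⟩ =>
      ⟨⟨he, (subset_join_left (union_subset hB.1.1 hx.1.1)).trans_ssubset h⟩, h⟩⟩
  rw [dgamma_eq_neg_one_sub_sum_mem hX heX, hsplit, sum_dgamma_join_ssubset hx hex hxX]
  ring

end Join

variable [DecidableEq α]

theorem statement_14_general (M : Matroid α) (e : α) :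
    (∀ X : Finset α, Cyclic M ↑X → e ∈ X →
      (∃ ZX : Finset α, CyclicFlat M ↑ZX ∧ ZX ⊂ X ∧ 0 < dgamma M e ZX) →
      (∀ Z0 Z1 : Finset α, CyclicFlat M ↑Z0 → CyclicFlat M ↑Z1 → Z0 ⊂ X → Z1 ⊂ X →
        0 < dgamma M e Z0 → 0 < dgamma M e Z1 → M.closure (↑Z0 ∪ ↑Z1) ⊂ (↑X : Set α)) →
      0 ≤ dgamma M e X) ∧
    (∀ W : Finset α, Cyclic M ↑W → e ∈ W →
      (∀ Z0 Z1 : Finset α, CyclicFlat M ↑Z0 → CyclicFlat M ↑Z1 → Z0 ⊂ W → Z1 ⊂ W →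
        dgamma M e Z0 < 0 → dgamma M e Z1 < 0 → M.closure (↑Z0 ∪ ↑Z1) ⊂ (↑W : Set α)) →
      dgamma M e W ≤ 0) := by
  refine ⟨fun X hX heX ⟨x, hx, hxX, hxpos⟩ hjoin => ?_, fun W hW heW hjoin => ?_⟩
  · have hex : e ∈ x := by
      by_contra h
      exact hxpos.ne' (dgamma_eq_zero_of_notMem hx h)
    rw [dgamma_eq_neg_sum_join_not_ssubset hX heX hx hex hxX, neg_nonneg]
    refine Finset.sum_nonpos fun Z hZ => not_lt.1 fun hZpos => ?_
    obtain ⟨hZ, -, hZX, hZx⟩ := Finset.mem_filter.1 hZ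
    exact hZx (Finset.coe_ssubset.1 (by
      rw [coe_join]; exact hjoin Z x (mem_cyclicFlats.1 hZ) hx hZX hxX hZpos hxpos))
  · by_cases hneg : ∃ x ∈ cyclicFlats M, (e ∈ x ∧ x ⊂ W) ∧ dgamma M e x < 0
    · obtain ⟨x, hx, ⟨hex, hxW⟩, hxneg⟩ := hneg
      rw [dgamma_eq_neg_sum_join_not_ssubset hW heW (mem_cyclicFlats.1 hx) hex hxW, neg_nonpos]
      refine Finset.sum_nonneg fun Z hZ => not_lt.1 fun hZneg => ?_
      obtain ⟨hZ, -, hZW, hZx⟩ := Finset.mem_filter.1 hZ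
      exact hZx (Finset.coe_ssubset.1 (by
        rw [coe_join]
        exact hjoin Z x (mem_cyclicFlats.1 hZ) (mem_cyclicFlats.1 hx) hZW hxW hZneg hxneg))
    · push Not at hneg
      have hsum := Finset.sum_nonneg fun Z hZ =>
        hneg Z (Finset.mem_filter.1 hZ).1 (Finset.mem_filter.1 hZ).2
      rw [dgamma_eq_neg_one_sub_sum_mem hW heW]
      linarith

theorem statement_14 (M : Matroid α) (e : α) (he : e ∈ M.E) :
    (∀ X : Finset α, Cyclic M ↑X → e ∈ X →
      (∃ ZX : Finset α, CyclicFlat M ↑ZX ∧ ZX ⊂ X ∧ 0 < dgamma M e ZX) →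
      (∀ Z0 Z1 : Finset α, CyclicFlat M ↑Z0 → CyclicFlat M ↑Z1 → Z0 ⊂ X → Z1 ⊂ X →
        0 < dgamma M e Z0 → 0 < dgamma M e Z1 → M.closure (↑Z0 ∪ ↑Z1) ⊂ (↑X : Set α)) →
      0 ≤ dgamma M e X) ∧
    (∀ W : Finset α, Cyclic M ↑W → e ∈ W →
      (∀ Z0 Z1 : Finset α, CyclicFlat M ↑Z0 → CyclicFlat M ↑Z1 → Z0 ⊂ W → Z1 ⊂ W →
        dgamma M e Z0 < 0 → dgamma M e Z1 < 0 → M.closure (↑Z0 ∪ ↑Z1) ⊂ (↑W : Set α)) →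
      dgamma M e W ≤ 0) :=
  statement_14_general M e

end Paper
end
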